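/- Airy-type contour integral. Define A : ℝ → ℂ by A(y) = (1/π) ∫_{Y₁∪Y₂} e^{2i(yz + 4z³/3)} dz. Then: (i) the defining integrals converge absolutely for every y ∈ ℝ; (ii) A is real-valued; (iii) A is infinitely differentiable, and for every integer j ≥ 0 and every y ∈ ℝ the integral ∫_{Y₁∪Y₂} z^j e^{2i(yz + 4z³/3)} dz converges absolutely and A^{(j)}(y) = ((2i)^j / π) ∫_{Y₁∪Y₂} z^j e^{2i(yz + 4z³/3)} dz; (iv) A satisfies the Airy equation A''(y) = y A(y) for all y ∈ ℝ. -/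

import Mathlib

/-!
Along both rays `r ↦ r e` we have `e ^ 3 = i`, so the cubic part of the phase contributes the
factor `exp (-8r³/3)` and every integrand `z ^ j e^{2i(yz + 4z³/3)}` is dominated by
`exp (C r - 8r³/3)`, locally uniformly in `y`. This gives absolute convergence and
differentiation under the integral sign, each `y`-derivative bringing down a factor `2iz`.
Conjugation maps `Y₁` onto `-Y₂` and the integrand on one ray to the integrand on the other,
so `A` is real. Finally, the `r`-derivative of the integrand along a ray is `2ie (y + 4z²)`
times the integrand, whose integral is `-1` on each ray; in `∫_{Y₁∪Y₂}` the two boundary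
terms cancel, so `∫ z² e^{…} dz = -(y/4) ∫ e^{…} dz`, which is `A'' = yA`.
-/

open MeasureTheory Set

/-- The unit direction `e^{iπ/6}` of the ray `Y₁`. -/
noncomputable def e1 : ℂ := Complex.exp (Real.pi / 6 * Complex.I)

/-- The unit direction `e^{5iπ/6}` of the ray `Y₂`. -/
noncomputable def e5 : ℂ := Complex.exp (5 * Real.pi / 6 * Complex.I)

/-- The contour integral over `Y₁ ∪ Y₂`:
`∫_{Y₁∪Y₂} h(z) dz = ∫₀^∞ h(r e^{iπ/6}) e^{iπ/6} dr - ∫₀^∞ h(r e^{5iπ/6}) e^{5iπ/6} dr`. -/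
noncomputable def CInt12 (h : ℂ → ℂ) : ℂ :=
  (∫ r in Ioi (0 : ℝ), h (r * e1)) * e1 - (∫ r in Ioi (0 : ℝ), h (r * e5)) * e5

/-- The Airy-type function `A(y) = (1/π) ∫_{Y₁∪Y₂} e^{2i(yz + 4z³/3)} dz`. -/
noncomputable def AiryA (y : ℝ) : ℂ :=
  (Real.pi : ℂ)⁻¹ * CInt12 (fun z => Complex.exp (2 * Complex.I * (y * z + 4 * z ^ 3 / 3)))

open Complex ComplexConjugate Filter Topology
open scoped Real

lemma eventually_mul_sub_mul_pow_three_le_neg (b : ℝ) {c : ℝ} (hc : 0 < c) :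
    ∀ᶠ r in atTop, b * r - c * r ^ 3 ≤ -r := by
  have hcr : Tendsto (fun r : ℝ => c * r ^ 2) atTop atTop :=
    (tendsto_pow_atTop two_ne_zero).const_mul_atTop hc
  filter_upwards [hcr.eventually_ge_atTop (b + 1), eventually_ge_atTop 0] with r hr hr0
  nlinarith [mul_le_mul_of_nonneg_right hr hr0]

lemma integrableOn_Ioi_exp_mul_sub_mul_pow_three (b : ℝ) {c : ℝ} (hc : 0 < c) :
    IntegrableOn (fun r : ℝ => Real.exp (b * r - c * r ^ 3)) (Ioi 0) := by
  refine integrable_of_isBigO_exp_neg one_pos (by fun_prop) (Asymptotics.IsBigO.of_bound 1 ?_)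
  filter_upwards [eventually_mul_sub_mul_pow_three_le_neg b hc] with r hr
  simpa using hr

lemma iteratedDeriv_eq_of_hasDerivAt_succ {𝕜 F : Type*} [NontriviallyNormedField 𝕜]
    [NormedAddCommGroup F] [NormedSpace 𝕜 F] {f : ℕ → 𝕜 → F}
    (hf : ∀ n x, HasDerivAt (f n) (f (n + 1) x) x) (n : ℕ) : iteratedDeriv n (f 0) = f n := by
  induction n with
  | zero => exact iteratedDeriv_zero
  | succ n ih => rw [iteratedDeriv_succ, ih]; exact funext fun x => (hf n x).deriv

lemma contDiff_of_hasDerivAt_succ {𝕜 F : Type*} [NontriviallyNormedField 𝕜]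
    [NormedAddCommGroup F] [NormedSpace 𝕜 F] {f : ℕ → 𝕜 → F}
    (hf : ∀ n x, HasDerivAt (f n) (f (n + 1) x) x) (n : ℕ∞) : ContDiff 𝕜 n (f 0) :=
  contDiff_of_differentiable_iteratedDeriv fun m _ => by
    rw [iteratedDeriv_eq_of_hasDerivAt_succ hf]
    exact fun x => (hf m x).differentiableAt

lemma e1_pow_three : e1 ^ 3 = I := by
  rw [e1, ← Complex.exp_nat_mul]
  convert exp_pi_div_two_mul_I using 2
  push_cast
  ring

lemma e5_pow_three : e5 ^ 3 = I := by
  rw [e5, ← Complex.exp_nat_mul]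
  convert (exp_periodic _).trans exp_pi_div_two_mul_I using 2
  push_cast
  ring

lemma conj_e1 : conj e1 = -e5 := by
  rw [e1, e5, ← exp_conj, ← exp_sub_pi_mul_I]
  congr 1
  simp only [map_mul, map_div₀, conj_ofReal, conj_I, map_ofNat]
  ring

lemma conj_e5 : conj e5 = -e1 := by
  rw [← neg_eq_iff_eq_neg.mpr conj_e1, map_neg, conj_conj]

lemma norm_eq_one_of_pow_three_eq_I {e : ℂ} (he : e ^ 3 = I) : ‖e‖ = 1 := by
  rw [← pow_left_inj₀ (norm_nonneg e) zero_le_one three_ne_zero, ← norm_pow, he, norm_I,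
    one_pow]

noncomputable def airyKernel (y : ℝ) (z : ℂ) : ℂ := cexp (2 * I * (y * z + 4 * z ^ 3 / 3))

lemma hasDerivAt_airyKernel (y : ℝ) (z : ℂ) :
    HasDerivAt (airyKernel y) (2 * I * (y + 4 * z ^ 2) * airyKernel y z) z := by
  have hphase : HasDerivAt (fun w : ℂ => 2 * I * (y * w + 4 * w ^ 3 / 3))
      (2 * I * (y + 4 * z ^ 2)) z := by
    refine ((((hasDerivAt_id z).const_mul (y : ℂ)).add
      (((hasDerivAt_pow 3 z).const_mul 4).div_const 3)).const_mul (2 * I)).congr_deriv ?_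
    simp only [mul_one, Nat.cast_ofNat]
    ring
  exact hphase.cexp.congr_deriv (mul_comm _ _)

lemma hasDerivAt_airyKernel_param (y : ℝ) (z : ℂ) :
    HasDerivAt (fun t : ℝ => airyKernel t z) (2 * I * z * airyKernel y z) y := by
  have hphase : HasDerivAt (fun t : ℝ => 2 * I * (t * z + 4 * z ^ 3 / 3)) (2 * I * z) y := by
    simpa using ((((hasDerivAt_id y).ofReal_comp).mul_const z).add_const
      (4 * z ^ 3 / 3)).const_mul (2 * I)
  exact hphase.cexp.congr_deriv (mul_comm _ _)

@[fun_prop]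
lemma continuous_airyKernel (y : ℝ) : Continuous (airyKernel y) := by
  unfold airyKernel
  fun_prop

lemma conj_airyKernel (y : ℝ) (z : ℂ) : conj (airyKernel y z) = airyKernel y (-conj z) := by
  rw [airyKernel, airyKernel, ← exp_conj]
  congr 1
  simp only [map_mul, map_add, map_div₀, map_pow, map_ofNat, conj_ofReal, conj_I]
  ring

section Ray

variable {e : ℂ} (he : e ^ 3 = I)
include he

lemma norm_airyKernel_ray (y r : ℝ) :
    ‖airyKernel y (r * e)‖ = Real.exp (-2 * y * e.im * r - 8 / 3 * r ^ 3) := by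
  have hphase : 2 * I * (y * (r * e) + 4 * (r * e) ^ 3 / 3) =
      ((2 * y * r : ℝ) : ℂ) * (I * e) - ((8 / 3 * r ^ 3 : ℝ) : ℂ) := by
    rw [mul_pow, he]
    push_cast
    linear_combination (8 / 3 * (r : ℂ) ^ 3) * I_sq
  rw [airyKernel, norm_exp, hphase, sub_re, re_ofReal_mul, I_mul_re, ofReal_re]
  congr 1
  ring

lemma norm_pow_mul_airyKernel_ray_le (j : ℕ) (y : ℝ) {r : ℝ} (hr : 0 ≤ r) :
    ‖(r * e) ^ j * airyKernel y (r * e)‖ ≤ Real.exp ((j + 2 * |y|) * r - 8 / 3 * r ^ 3) := by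
  have hpow : r ^ j ≤ Real.exp (j * r) := by
    rw [Real.exp_nat_mul]
    exact pow_le_pow_left₀ hr (by linarith [Real.add_one_le_exp r]) j
  have hlin : -2 * y * e.im * r ≤ 2 * |y| * r := by
    have him : |e.im| ≤ 1 := norm_eq_one_of_pow_three_eq_I he ▸ abs_im_le_norm e
    have hy : -(y * e.im) ≤ |y| := (neg_le_abs _).trans
      ((abs_mul y e.im).trans_le (mul_le_of_le_one_right (abs_nonneg y) him))
    nlinarith
  rw [norm_mul, norm_pow, norm_mul, norm_eq_one_of_pow_three_eq_I he, mul_one, norm_real,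
    Real.norm_of_nonneg hr, norm_airyKernel_ray he, add_mul, add_sub_assoc, Real.exp_add]
  gcongr

lemma integrableOn_pow_mul_airyKernel_ray (j : ℕ) (y : ℝ) :
    IntegrableOn (fun r : ℝ => (r * e) ^ j * airyKernel y (r * e)) (Ioi 0) :=
  (integrableOn_Ioi_exp_mul_sub_mul_pow_three _ (by norm_num)).mono'
    (Continuous.aestronglyMeasurable (by fun_prop))
    (ae_restrict_of_forall_mem measurableSet_Ioi fun _ hr =>
      norm_pow_mul_airyKernel_ray_le he j y (le_of_lt hr))

lemma integrableOn_airyKernel_ray (y : ℝ) :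
    IntegrableOn (fun r : ℝ => airyKernel y (r * e)) (Ioi 0) := by
  simpa using integrableOn_pow_mul_airyKernel_ray he 0 y

lemma hasDerivAt_integral_pow_mul_airyKernel_ray (j : ℕ) (y : ℝ) :
    HasDerivAt (fun t : ℝ => ∫ r in Ioi (0 : ℝ), (r * e) ^ j * airyKernel t (r * e))
      (2 * I * ∫ r in Ioi (0 : ℝ), (r * e) ^ (j + 1) * airyKernel y (r * e)) y := by
  rw [← integral_const_mul]
  refine (hasDerivAt_integral_of_dominated_loc_of_deriv_le (Metric.ball_mem_nhds y one_pos)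
    (F := fun t r => (r * e) ^ j * airyKernel t (r * e))
    (F' := fun t r => 2 * I * ((r * e) ^ (j + 1) * airyKernel t (r * e)))
    (bound := fun r => 2 * Real.exp ((j + 1 + 2 * (|y| + 1)) * r - 8 / 3 * r ^ 3))
    (.of_forall fun _ => (Continuous.aestronglyMeasurable (by fun_prop)))
    (integrableOn_pow_mul_airyKernel_ray he j y) (Continuous.aestronglyMeasurable (by fun_prop))
    ?_ ((integrableOn_Ioi_exp_mul_sub_mul_pow_three _ (by norm_num)).const_mul 2) ?_).2
  · refine ae_restrict_of_forall_mem measurableSet_Ioi fun r hr t ht => ?_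
    have hty : |t| ≤ |y| + 1 := by
      have := abs_sub_abs_le_abs_sub t y
      rw [← Real.dist_eq] at this
      linarith [Metric.mem_ball.mp ht]
    rw [norm_mul, norm_mul, Complex.norm_two, norm_I, mul_one]
    refine mul_le_mul_of_nonneg_left
      ((norm_pow_mul_airyKernel_ray_le he (j + 1) t (le_of_lt hr)).trans ?_) zero_le_two
    gcongr
    · exact le_of_lt hr
    · push_cast; linarith
  · refine .of_forall fun r t _ =>
      ((hasDerivAt_airyKernel_param t (r * e)).const_mul ((r * e) ^ j)).congr_deriv ?_
    ring

lemma integral_airyKernel_ray_identity (y : ℝ) :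
    2 * I * e * (y * (∫ r in Ioi (0 : ℝ), airyKernel y (r * e)) +
      4 * ∫ r in Ioi (0 : ℝ), (r * e) ^ 2 * airyKernel y (r * e)) = -1 := by
  have hint₀ := integrableOn_airyKernel_ray he y
  have hint₂ := integrableOn_pow_mul_airyKernel_ray he 2 y
  have hderiv : ∀ r : ℝ, HasDerivAt (fun r : ℝ => airyKernel y (r * e))
      (2 * I * e * (y * airyKernel y (r * e) + 4 * ((r * e) ^ 2 * airyKernel y (r * e)))) r :=
    fun r => by
      have hcomp := (hasDerivAt_airyKernel y (r * e)).comp (r : ℂ) (hasDerivAt_mul_const e)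
      exact hcomp.comp_ofReal.congr_deriv (by ring)
  have hderiv_int := ((hint₀.const_mul (y : ℂ)).add (hint₂.const_mul 4)).const_mul (2 * I * e)
  have hftc := integral_Ioi_of_hasDerivAt_of_tendsto' (fun r _ => hderiv r) hderiv_int
    (tendsto_zero_of_hasDerivAt_of_integrableOn_Ioi (fun r _ => hderiv r) hderiv_int hint₀)
  rw [integral_const_mul, integral_add (hint₀.const_mul _) (hint₂.const_mul _),
    integral_const_mul, integral_const_mul] at hftc
  rw [hftc]
  simp [airyKernel]

end Ray

lemma conj_CInt12 {h : ℂ → ℂ} (hh : ∀ z, conj (h z) = h (-conj z)) :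
    conj (CInt12 h) = CInt12 h := by
  simp only [CInt12, map_sub, map_mul, ← integral_conj, hh, conj_ofReal, conj_e1, conj_e5,
    mul_neg, neg_neg]
  ring

noncomputable def airyMoment (j : ℕ) (y : ℝ) : ℂ :=
  (2 * I) ^ j / π * CInt12 (fun z => z ^ j * airyKernel y z)

lemma AiryA_def (y : ℝ) : AiryA y = (π : ℂ)⁻¹ * CInt12 (airyKernel y) := rfl

lemma airyMoment_zero : airyMoment 0 = AiryA := by
  ext y
  simp [airyMoment, AiryA, airyKernel]

lemma hasDerivAt_airyMoment (j : ℕ) (y : ℝ) :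
    HasDerivAt (airyMoment j) (airyMoment (j + 1) y) y := by
  have h1 := hasDerivAt_integral_pow_mul_airyKernel_ray e1_pow_three j y
  have h5 := hasDerivAt_integral_pow_mul_airyKernel_ray e5_pow_three j y
  refine (((h1.mul_const e1).sub (h5.mul_const e5)).const_mul ((2 * I) ^ j / π)).congr_deriv ?_
  simp only [airyMoment, CInt12]
  ring

lemma iteratedDeriv_AiryA (j : ℕ) : iteratedDeriv j AiryA = airyMoment j := by
  rw [← airyMoment_zero, iteratedDeriv_eq_of_hasDerivAt_succ hasDerivAt_airyMoment]

lemma AiryA_im (y : ℝ) : (AiryA y).im = 0 := by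
  rw [← conj_eq_iff_im, AiryA_def, map_mul, map_inv₀, conj_ofReal,
    conj_CInt12 fun z => conj_airyKernel y z]

lemma CInt12_sq_mul_airyKernel (y : ℝ) :
    CInt12 (fun z => z ^ 2 * airyKernel y z) = -(y / 4) * CInt12 (airyKernel y) := by
  have h1 := integral_airyKernel_ray_identity e1_pow_three y
  have h5 := integral_airyKernel_ray_identity e5_pow_three y
  have hI : (8 * I : ℂ) ≠ 0 := by simp
  refine mul_left_cancel₀ hI ?_
  simp only [CInt12]
  linear_combination h1 - h5

lemma iteratedDeriv_two_AiryA (y : ℝ) : iteratedDeriv 2 AiryA y = y * AiryA y := by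
  rw [iteratedDeriv_AiryA, airyMoment, CInt12_sq_mul_airyKernel, AiryA_def]
  have hπ : (π : ℂ) ≠ 0 := ofReal_ne_zero.mpr Real.pi_ne_zero
  rw [mul_pow, I_sq]
  field_simp
  ring

theorem airy_contour_integral :
    -- (i) absolute convergence of the defining integrals
    (∀ y : ℝ,
      IntegrableOn
        (fun r : ℝ => Complex.exp (2 * Complex.I * (y * (r * e1) + 4 * (r * e1) ^ 3 / 3)))
        (Ioi 0) ∧
      IntegrableOn
        (fun r : ℝ => Complex.exp (2 * Complex.I * (y * (r * e5) + 4 * (r * e5) ^ 3 / 3)))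
        (Ioi 0)) ∧
    -- (ii) A is real-valued
    (∀ y : ℝ, (AiryA y).im = 0) ∧
    -- (iii) A is smooth and its derivatives are given by contour integrals
    (∀ n : ℕ, ContDiff ℝ n AiryA) ∧
    (∀ j : ℕ, ∀ y : ℝ,
      (IntegrableOn
        (fun r : ℝ => (r * e1) ^ j *
          Complex.exp (2 * Complex.I * (y * (r * e1) + 4 * (r * e1) ^ 3 / 3))) (Ioi 0) ∧
       IntegrableOn
        (fun r : ℝ => (r * e5) ^ j *
          Complex.exp (2 * Complex.I * (y * (r * e5) + 4 * (r * e5) ^ 3 / 3))) (Ioi 0)) ∧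
      iteratedDeriv j AiryA y =
        ((2 * Complex.I) ^ j / (Real.pi : ℂ)) *
          CInt12 (fun z => z ^ j * Complex.exp (2 * Complex.I * (y * z + 4 * z ^ 3 / 3)))) ∧
    -- (iv) the Airy equation
    (∀ y : ℝ, iteratedDeriv 2 AiryA y = (y : ℂ) * AiryA y) := by
  refine ⟨fun y => ⟨integrableOn_airyKernel_ray e1_pow_three y,
      integrableOn_airyKernel_ray e5_pow_three y⟩,
    AiryA_im, fun n => airyMoment_zero ▸ contDiff_of_hasDerivAt_succ hasDerivAt_airyMoment n,
    fun j y => ⟨⟨integrableOn_pow_mul_airyKernel_ray e1_pow_three j y,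
      integrableOn_pow_mul_airyKernel_ray e5_pow_three j y⟩,
      congrFun (iteratedDeriv_AiryA j) y⟩,
    iteratedDeriv_two_AiryA⟩
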